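/- Let k be a field of characteristic zero and let P = MvPolynomial (Fin 3) k with u₁ = X 0, u₂ = X 1, u₃ = X 2 and Poisson bracket ⁅p,q⁆ = u₁u₂·(∂₀p·∂₁q − ∂₁p·∂₀q) + u₁u₃·(∂₀p·∂₂q − ∂₂p·∂₀q) − u₂u₃·(∂₁p·∂₂q − ∂₂p·∂₁q), where ∂ᵢ = pderiv i (so ⁅u₁,u₂⁆ = u₁u₂, ⁅u₁,u₃⁆ = u₁u₃, ⁅u₃,u₂⁆ = u₂u₃). Let g be the algebra automorphism of P with g(u₁) = u₁, g(u₂) = u₂, g(u₃) = −u₃, and let x : P → P be the k-linear g-twisted derivation (x(a*b) = g(a)*x(b) + x(a)*b) with x(u₁) = 0, x(u₂) = 0, x(u₃) = u₁u₂. Then g preserves the bracket (g⁅a,b⁆ = ⁅g a, g b⁆ for all a,b ∈ P) and x satisfies the Poisson compatibility x⁅a,b⁆ = ⁅g a, x b⁆ + ⁅x a, b⁆ for all a,b ∈ P; hence this defines a module Poisson algebra structure for the Sweedler algebra T₂(−1) on P that does not preserve the grading. -/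
import Mathlib


open MvPolynomial

/-- The Poisson bracket on `P = k[u₁,u₂,u₃]` with
`⁅u₁,u₂⁆ = u₁u₂`, `⁅u₁,u₃⁆ = u₁u₃`, `⁅u₃,u₂⁆ = u₂u₃`. -/
noncomputable def ewBracket {k : Type*} [Field k]
    (p q : MvPolynomial (Fin 3) k) : MvPolynomial (Fin 3) k :=
  X 0 * X 1 * (pderiv 0 p * pderiv 1 q - pderiv 1 p * pderiv 0 q) +
    X 0 * X 2 * (pderiv 0 p * pderiv 2 q - pderiv 2 p * pderiv 0 q) -
    X 1 * X 2 * (pderiv 1 p * pderiv 2 q - pderiv 2 p * pderiv 1 q)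

section ewAux
variable {k : Type*} [Field k]


lemma ewB_mul_left (a a' b : MvPolynomial (Fin 3) k) :
    ewBracket (a * a') b = a * ewBracket a' b + a' * ewBracket a b := by
  simp only [ewBracket, pderiv_mul]; ring

lemma ewB_mul_right (a b b' : MvPolynomial (Fin 3) k) :
    ewBracket a (b * b') = b * ewBracket a b' + b' * ewBracket a b := by
  simp only [ewBracket, pderiv_mul]; ring

lemma ewB_add_left (a a' b : MvPolynomial (Fin 3) k) :
    ewBracket (a + a') b = ewBracket a b + ewBracket a' b := by
  simp only [ewBracket, map_add]; ring

lemma ewB_add_right (a b b' : MvPolynomial (Fin 3) k) :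
    ewBracket a (b + b') = ewBracket a b + ewBracket a b' := by
  simp only [ewBracket, map_add]; ring

lemma ewB_sub_left (a a' b : MvPolynomial (Fin 3) k) :
    ewBracket (a - a') b = ewBracket a b - ewBracket a' b := by
  simp only [ewBracket, map_sub]; ring

lemma ewB_sub_right (a b b' : MvPolynomial (Fin 3) k) :
    ewBracket a (b - b') = ewBracket a b - ewBracket a b' := by
  simp only [ewBracket, map_sub]; ring

lemma ewB_C_left (r : k) (b : MvPolynomial (Fin 3) k) : ewBracket (C r) b = 0 := by
  simp [ewBracket]

lemma ewB_C_right (r : k) (a : MvPolynomial (Fin 3) k) : ewBracket a (C r) = 0 := by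
  simp [ewBracket]

lemma ewB_zero_left (b : MvPolynomial (Fin 3) k) : ewBracket 0 b = 0 := by
  simp [ewBracket]

lemma ewB_zero_right (a : MvPolynomial (Fin 3) k) : ewBracket a 0 = 0 := by
  simp [ewBracket]

lemma ewB_neg_left (a b : MvPolynomial (Fin 3) k) : ewBracket (-a) b = -ewBracket a b := by
  simp only [ewBracket, map_neg]; ring

lemma ewB_neg_right (a b : MvPolynomial (Fin 3) k) : ewBracket a (-b) = -ewBracket a b := by
  simp only [ewBracket, map_neg]; ring

lemma ewB_antisymm (a b : MvPolynomial (Fin 3) k) : ewBracket a b = -ewBracket b a := by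
  simp only [ewBracket]; ring

-- generator brackets
lemma ewB_00 : ewBracket (X 0) (X 0) = (0 : MvPolynomial (Fin 3) k) := by
  simp [ewBracket]
lemma ewB_01 : ewBracket (X 0) (X 1) = (X 0 * X 1 : MvPolynomial (Fin 3) k) := by
  simp [ewBracket, pderiv_X]
lemma ewB_02 : ewBracket (X 0) (X 2) = (X 0 * X 2 : MvPolynomial (Fin 3) k) := by
  simp [ewBracket, pderiv_X]
lemma ewB_12 : ewBracket (X 1) (X 2) = (-(X 1 * X 2) : MvPolynomial (Fin 3) k) := by
  simp [ewBracket, pderiv_X]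
variable {k : Type*} [Field k]

lemma gC (g : MvPolynomial (Fin 3) k ≃ₐ[k] MvPolynomial (Fin 3) k) (r : k) :
    g (C r) = C r := by
  rw [← MvPolynomial.algebraMap_eq]; exact g.commutes r

lemma pd_g (g : MvPolynomial (Fin 3) k ≃ₐ[k] MvPolynomial (Fin 3) k)
    (hg0 : g (X 0) = X 0) (hg1 : g (X 1) = X 1) (hg2 : g (X 2) = -X 2)
    (p : MvPolynomial (Fin 3) k) :
    pderiv 0 (g p) = g (pderiv 0 p) ∧ pderiv 1 (g p) = g (pderiv 1 p) ∧
      pderiv 2 (g p) = -g (pderiv 2 p) := by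
  induction p using MvPolynomial.induction_on with
  | C r => simp [gC g r, pderiv_C]
  | add p q hp hq =>
    refine ⟨?_, ?_, ?_⟩ <;>
      simp only [map_add, hp.1, hp.2.1, hp.2.2, hq.1, hq.2.1, hq.2.2, neg_add]
  | mul_X p n hp =>
    obtain hn | hn | hn : n = 0 ∨ n = 1 ∨ n = 2 := by omega
    all_goals subst hn
    all_goals refine ⟨?_, ?_, ?_⟩
    all_goals simp only [map_mul, hg0, hg1, hg2, pderiv_mul, hp.1, hp.2.1, hp.2.2,
        pderiv_X_self, pderiv_X_of_ne (show (0:Fin 3) ≠ 1 by decide),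
        pderiv_X_of_ne (show (0:Fin 3) ≠ 2 by decide),
        pderiv_X_of_ne (show (1:Fin 3) ≠ 0 by decide),
        pderiv_X_of_ne (show (1:Fin 3) ≠ 2 by decide),
        pderiv_X_of_ne (show (2:Fin 3) ≠ 0 by decide),
        pderiv_X_of_ne (show (2:Fin 3) ≠ 1 by decide),
        map_mul, map_neg, mul_neg, neg_mul, mul_zero, mul_one, add_zero, zero_add,
        neg_neg, map_add, neg_add]
    all_goals ring

lemma stmt1 (g : MvPolynomial (Fin 3) k ≃ₐ[k] MvPolynomial (Fin 3) k)
    (hg0 : g (X 0) = X 0) (hg1 : g (X 1) = X 1) (hg2 : g (X 2) = -X 2)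
    (a b : MvPolynomial (Fin 3) k) :
    g (ewBracket a b) = ewBracket (g a) (g b) := by
  obtain ⟨a0, a1, a2⟩ := pd_g g hg0 hg1 hg2 a
  obtain ⟨b0, b1, b2⟩ := pd_g g hg0 hg1 hg2 b
  simp only [ewBracket, map_add, map_sub, map_mul, hg0, hg1, hg2, a0, a1, a2, b0, b1, b2]
  ring

-- more generator brackets
lemma ewB_11 : ewBracket (X 1) (X 1) = (0 : MvPolynomial (Fin 3) k) := by
  simp [ewBracket]
lemma ewB_22 : ewBracket (X 2) (X 2) = (0 : MvPolynomial (Fin 3) k) := by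
  simp [ewBracket]
lemma ewB_10 : ewBracket (X 1) (X 0) = (-(X 0 * X 1) : MvPolynomial (Fin 3) k) := by
  rw [ewB_antisymm, ewB_01]
lemma ewB_20 : ewBracket (X 2) (X 0) = (-(X 0 * X 2) : MvPolynomial (Fin 3) k) := by
  rw [ewB_antisymm, ewB_02]
lemma ewB_21 : ewBracket (X 2) (X 1) = (X 1 * X 2 : MvPolynomial (Fin 3) k) := by
  rw [ewB_antisymm, ewB_12]; ring

section twisted
variable (g : MvPolynomial (Fin 3) k ≃ₐ[k] MvPolynomial (Fin 3) k)
    (x : MvPolynomial (Fin 3) k →ₗ[k] MvPolynomial (Fin 3) k)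

lemma x_one (hx_mul : ∀ a b, x (a * b) = g a * x b + x a * b) : x 1 = 0 := by
  have h := hx_mul 1 1
  simp only [mul_one, map_one, one_mul] at h
  linear_combination -h

lemma x_C (hx_mul : ∀ a b, x (a * b) = g a * x b + x a * b) (r : k) : x (C r) = 0 := by
  have : (C r : MvPolynomial (Fin 3) k) = r • (1 : MvPolynomial (Fin 3) k) := by
    rw [smul_eq_C_mul, mul_one]
  rw [this, map_smul, x_one g x hx_mul, smul_zero]

lemma keyC (hg0 : g (X 0) = X 0) (hg1 : g (X 1) = X 1) (hg2 : g (X 2) = -X 2)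
    (hx0 : x (X 0) = 0) (hx1 : x (X 1) = 0) (hx2 : x (X 2) = X 0 * X 1)
    (hx_mul : ∀ a b, x (a * b) = g a * x b + x a * b) (p : MvPolynomial (Fin 3) k) :
    X 2 * x p + X 2 * x p = X 0 * X 1 * (p - g p) := by
  induction p using MvPolynomial.induction_on with
  | C r => rw [x_C g x hx_mul, gC]; ring
  | add p q hp hq => rw [map_add, map_add]; linear_combination hp + hq
  | mul_X p n hp =>
    obtain hn | hn | hn : n = 0 ∨ n = 1 ∨ n = 2 := by omega
    · subst hn; rw [hx_mul p (X 0), hx0, map_mul, hg0, mul_zero, zero_add]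
      linear_combination X 0 * hp
    · subst hn; rw [hx_mul p (X 1), hx1, map_mul, hg1, mul_zero, zero_add]
      linear_combination X 1 * hp
    · subst hn; rw [hx_mul p (X 2), hx2, map_mul, hg2]
      linear_combination X 2 * hp

lemma key2 (b : MvPolynomial (Fin 3) k) :
    X 2 * ewBracket ((X 0 : MvPolynomial (Fin 3) k) * X 1) b
      = X 0 * X 1 * ewBracket (X 2) b := by
  simp only [ewBracket, pderiv_mul, pderiv_X_self,
    pderiv_X_of_ne (show (0:Fin 3) ≠ 1 by decide),
    pderiv_X_of_ne (show (0:Fin 3) ≠ 2 by decide),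
    pderiv_X_of_ne (show (1:Fin 3) ≠ 0 by decide),
    pderiv_X_of_ne (show (1:Fin 3) ≠ 2 by decide),
    pderiv_X_of_ne (show (2:Fin 3) ≠ 0 by decide),
    pderiv_X_of_ne (show (2:Fin 3) ≠ 1 by decide)]
  ring

lemma key3 (hg0 : g (X 0) = X 0) (hg1 : g (X 1) = X 1) (hg2 : g (X 2) = -X 2)
    (hx0 : x (X 0) = 0) (hx1 : x (X 1) = 0) (hx2 : x (X 2) = X 0 * X 1)
    (hx_mul : ∀ a b, x (a * b) = g a * x b + x a * b) (p b : MvPolynomial (Fin 3) k) :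
    (p - g p) * ewBracket ((X 0 : MvPolynomial (Fin 3) k) * X 1) b
      = (x p + x p) * ewBracket (X 2) b := by
  have hX2 : (X 2 : MvPolynomial (Fin 3) k) ≠ 0 := X_ne_zero 2
  apply mul_left_cancel₀ hX2
  linear_combination (p - g p) * key2 b
    - ewBracket (X 2) b * keyC g x hg0 hg1 hg2 hx0 hx1 hx2 hx_mul p

lemma Lsym (hg0 : g (X 0) = X 0) (hg1 : g (X 1) = X 1) (hg2 : g (X 2) = -X 2)
    (hx0 : x (X 0) = 0) (hx1 : x (X 1) = 0) (hx2 : x (X 2) = X 0 * X 1)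
    (hx_mul : ∀ a b, x (a * b) = g a * x b + x a * b) (q p : MvPolynomial (Fin 3) k) :
    (q - g q) * x p = x q * (p - g p) := by
  have hX : (X 0 : MvPolynomial (Fin 3) k) * X 1 ≠ 0 :=
    mul_ne_zero (X_ne_zero 0) (X_ne_zero 1)
  apply mul_left_cancel₀ hX
  have h1 := keyC g x hg0 hg1 hg2 hx0 hx1 hx2 hx_mul q
  have h2 := keyC g x hg0 hg1 hg2 hx0 hx1 hx2 hx_mul p
  linear_combination x q * h2 - x p * h1

lemma keyG (hg0 : g (X 0) = X 0) (hg1 : g (X 1) = X 1) (hg2 : g (X 2) = -X 2)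
    (hx0 : x (X 0) = 0) (hx1 : x (X 1) = 0) (hx2 : x (X 2) = X 0 * X 1)
    (hx_mul : ∀ a b, x (a * b) = g a * x b + x a * b) (p b : MvPolynomial (Fin 3) k) :
    X 2 * ewBracket (x p) b + X 2 * ewBracket (x p) b
      = X 0 * X 1 * ewBracket (p - g p) b := by
  have h1 : ewBracket (X 2 * x p + X 2 * x p) b
      = ewBracket (X 0 * X 1 * (p - g p)) b := by
    rw [keyC g x hg0 hg1 hg2 hx0 hx1 hx2 hx_mul p]
  have hA := ewB_add_left (X 2 * x p) (X 2 * x p) b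
  have hM1 := ewB_mul_left (X 2) (x p) b
  have hT := ewB_mul_left ((X 0 : MvPolynomial (Fin 3) k) * X 1) (p - g p) b
  have hk3 := key3 g x hg0 hg1 hg2 hx0 hx1 hx2 hx_mul p b
  linear_combination h1 - hA - 2 * hM1 + hT + hk3

end twisted

section twisted2
variable (g : MvPolynomial (Fin 3) k ≃ₐ[k] MvPolynomial (Fin 3) k)
    (x : MvPolynomial (Fin 3) k →ₗ[k] MvPolynomial (Fin 3) k)

lemma keyH (hg0 : g (X 0) = X 0) (hg1 : g (X 1) = X 1) (hg2 : g (X 2) = -X 2)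
    (hx0 : x (X 0) = 0) (hx1 : x (X 1) = 0) (hx2 : x (X 2) = X 0 * X 1)
    (hx_mul : ∀ a b, x (a * b) = g a * x b + x a * b) (a : MvPolynomial (Fin 3) k) :
    ∀ q b, (q - g q) * ewBracket (x a) b = x q * ewBracket (a - g a) b := by
  induction a using MvPolynomial.induction_on with
  | C r =>
    intro q b
    rw [x_C g x hx_mul, gC, sub_self, ewB_zero_left]; ring
  | add p p' hp hp' =>
    intro q b
    have h1 := hp q b
    have h2 := hp' q b
    simp only [ewB_sub_left, ewB_add_left, map_add] at h1 h2 ⊢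
    linear_combination h1 + h2
  | mul_X p n hp =>
    intro q b
    have hpe := hp q b
    have ls := Lsym g x hg0 hg1 hg2 hx0 hx1 hx2 hx_mul q p
    simp only [ewB_sub_left] at hpe
    obtain hn | hn | hn : n = 0 ∨ n = 1 ∨ n = 2 := by omega
    · subst hn
      have e1 : x (p * X 0) = x p * X 0 := by
        rw [hx_mul p (X 0), hx0, mul_zero, zero_add]
      have e2 : p * X 0 - g (p * X 0) = (p - g p) * X 0 := by
        rw [map_mul, hg0]; ring
      rw [e1, e2, ewB_mul_left, ewB_mul_left]
      simp only [ewB_sub_left]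
      linear_combination ewBracket (X 0) b * ls + X 0 * hpe
    · subst hn
      have e1 : x (p * X 1) = x p * X 1 := by
        rw [hx_mul p (X 1), hx1, mul_zero, zero_add]
      have e2 : p * X 1 - g (p * X 1) = (p - g p) * X 1 := by
        rw [map_mul, hg1]; ring
      rw [e1, e2, ewB_mul_left, ewB_mul_left]
      simp only [ewB_sub_left]
      linear_combination ewBracket (X 1) b * ls + X 1 * hpe
    · subst hn
      have e1 : x (p * X 2) = g p * (X 0 * X 1) + x p * X 2 := by
        rw [hx_mul p (X 2), hx2]
      have e2 : p * X 2 - g (p * X 2) = p * X 2 + g p * X 2 := by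
        rw [map_mul, hg2]; ring
      have k3 := key3 g x hg0 hg1 hg2 hx0 hx1 hx2 hx_mul q b
      have kC := keyC g x hg0 hg1 hg2 hx0 hx1 hx2 hx_mul q
      rw [e1, e2]
      simp only [ewB_add_left, ewB_mul_left] at k3 ⊢
      linear_combination g p * k3 - ewBracket (g p) b * kC
        + ewBracket (X 2) b * ls + X 2 * hpe
end twisted2

section final
variable (g : MvPolynomial (Fin 3) k ≃ₐ[k] MvPolynomial (Fin 3) k)
    (x : MvPolynomial (Fin 3) k →ₗ[k] MvPolynomial (Fin 3) k)

lemma Qgen2 (hg0 : g (X 0) = X 0) (hg1 : g (X 1) = X 1) (hg2 : g (X 2) = -X 2)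
    (hx0 : x (X 0) = 0) (hx1 : x (X 1) = 0) (hx2 : x (X 2) = X 0 * X 1)
    (hx_mul : ∀ a b, x (a * b) = g a * x b + x a * b) (n m : Fin 3) :
    x (ewBracket (X n) (X m)) = ewBracket (g (X n)) (x (X m)) + ewBracket (x (X n)) (X m) := by
  obtain hn | hn | hn : n = 0 ∨ n = 1 ∨ n = 2 := by omega
  all_goals obtain hm | hm | hm : m = 0 ∨ m = 1 ∨ m = 2 := by omega
  all_goals (subst hn; subst hm)
  all_goals
    simp only [ewB_00, ewB_01, ewB_02, ewB_10, ewB_11, ewB_12, ewB_20, ewB_21, ewB_22,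
      map_zero, map_neg, hx_mul, hx0, hx1, hx2, hg0, hg1, hg2,
      ewB_zero_left, ewB_zero_right, ewB_neg_left, ewB_neg_right,
      ewB_mul_left, ewB_mul_right, mul_zero, zero_mul, zero_add, add_zero, neg_zero]
  all_goals ring

lemma Rgen (hg0 : g (X 0) = X 0) (hg1 : g (X 1) = X 1) (hg2 : g (X 2) = -X 2)
    (hx0 : x (X 0) = 0) (hx1 : x (X 1) = 0) (hx2 : x (X 2) = X 0 * X 1)
    (hx_mul : ∀ a b, x (a * b) = g a * x b + x a * b) (a : MvPolynomial (Fin 3) k) :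
    ∀ m : Fin 3,
      x (ewBracket a (X m)) = ewBracket (g a) (x (X m)) + ewBracket (x a) (X m) := by
  induction a using MvPolynomial.induction_on with
  | C r =>
    intro m
    rw [ewB_C_left, map_zero, gC, ewB_C_left, x_C g x hx_mul, ewB_zero_left, add_zero]
  | add p p' hp hp' =>
    intro m
    have h1 := hp m
    have h2 := hp' m
    simp only [map_add, ewB_add_left] at h1 h2 ⊢
    linear_combination h1 + h2
  | mul_X p n hp =>
    intro m
    have q2 := Qgen2 g x hg0 hg1 hg2 hx0 hx1 hx2 hx_mul n m
    have hpm := hp m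
    have hH := keyH g x hg0 hg1 hg2 hx0 hx1 hx2 hx_mul p (X n) (X m)
    simp only [ewB_sub_left] at hH
    rw [ewB_mul_left p (X n) (X m), map_add, hx_mul p (ewBracket (X n) (X m)),
      hx_mul (X n) (ewBracket p (X m)), map_mul g p (X n), hx_mul p (X n)]
    simp only [ewB_mul_left, ewB_add_left]
    linear_combination g p * q2 + g (X n) * hpm - hH

lemma stmt2 (hg0 : g (X 0) = X 0) (hg1 : g (X 1) = X 1) (hg2 : g (X 2) = -X 2)
    (hx0 : x (X 0) = 0) (hx1 : x (X 1) = 0) (hx2 : x (X 2) = X 0 * X 1)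
    (hx_mul : ∀ a b, x (a * b) = g a * x b + x a * b) (a b : MvPolynomial (Fin 3) k) :
    x (ewBracket a b) = ewBracket (g a) (x b) + ewBracket (x a) b := by
  induction b using MvPolynomial.induction_on with
  | C r =>
    rw [ewB_C_right, map_zero, x_C g x hx_mul, ewB_zero_right, ewB_C_right, add_zero]
  | add q q' h1 h2 =>
    simp only [map_add, ewB_add_right] at h1 h2 ⊢
    linear_combination h1 + h2
  | mul_X q m hq =>
    have hR := Rgen g x hg0 hg1 hg2 hx0 hx1 hx2 hx_mul a m
    have hH := keyH g x hg0 hg1 hg2 hx0 hx1 hx2 hx_mul a q (X m)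
    simp only [ewB_sub_left] at hH
    have hL := Lsym g x hg0 hg1 hg2 hx0 hx1 hx2 hx_mul (X m) (ewBracket a q)
    have s1 := stmt1 g hg0 hg1 hg2 a q
    rw [ewB_mul_right a q (X m), map_add, hx_mul q (ewBracket a (X m)),
      hx_mul (X m) (ewBracket a q), hx_mul q (X m)]
    simp only [ewB_mul_right, ewB_add_right]
    linear_combination g q * hR + X m * hq - hH - hL + x (X m) * s1

end final


end ewAux

/-- The (non graded-preserving) Sweedler algebra `T₂(−1)` action on `P` given by
`g(u₁) = u₁`, `g(u₂) = u₂`, `g(u₃) = −u₃`, `x(u₁) = x(u₂) = 0`, `x(u₃) = u₁u₂`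
is an action by a Poisson automorphism `g` and a compatible twisted derivation `x`,
giving `P` the structure of a `T₂(−1)`-module Poisson algebra. -/


theorem sweedler_nonlinear_action {k : Type*} [Field k] [CharZero k]
    (g : MvPolynomial (Fin 3) k ≃ₐ[k] MvPolynomial (Fin 3) k)
    (hg0 : g (X 0) = X 0) (hg1 : g (X 1) = X 1) (hg2 : g (X 2) = -X 2)
    (x : MvPolynomial (Fin 3) k →ₗ[k] MvPolynomial (Fin 3) k)
    (hx0 : x (X 0) = 0) (hx1 : x (X 1) = 0) (hx2 : x (X 2) = X 0 * X 1)
    (hx_mul : ∀ a b, x (a * b) = g a * x b + x a * b) :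
    (∀ a b : MvPolynomial (Fin 3) k, g (ewBracket a b) = ewBracket (g a) (g b)) ∧
    (∀ a b : MvPolynomial (Fin 3) k,
      x (ewBracket a b) = ewBracket (g a) (x b) + ewBracket (x a) b) := 
  ⟨stmt1 g hg0 hg1 hg2, stmt2 g x hg0 hg1 hg2 hx0 hx1 hx2 hx_mul⟩
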